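/- For an m-homogeneous polynomial P on ℂⁿ and 1 ≤ k ≤ m, one has S_{k−1} L_P = 𝔄^k ⊙ S_k L_P, i.e. for every index i, c_i(S_{k−1} L_P) = c_i(𝔄^k) · c_i(S_k L_P), where c_i(𝔄^k) = k/|{1 ≤ u ≤ k : i_u = i_k}| when max{i₁,...,i_{k−1}} ≤ i_k and c_i(𝔄^k) = 0 otherwise. -/

import Mathlib

/-- The (non-symmetric) `m`-form associated to a coefficient array `c`
(supported on nondecreasing multi-indices). -/
noncomputable def LP (n m : ℕ) (c : (Fin m → Fin n) → ℂ) : (Fin m → (Fin n → ℂ)) → ℂ :=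
  fun x => ∑ j : Fin m → Fin n, c j * ∏ k : Fin m, x k (j k)

/-- Partial symmetrization over the first `k` arguments. -/
noncomputable def partialSym (n m k : ℕ) (L : (Fin m → (Fin n → ℂ)) → ℂ) :
    (Fin m → (Fin n → ℂ)) → ℂ :=
  fun x => (Nat.factorial k : ℂ)⁻¹ *
    ∑ σ ∈ Finset.univ.filter
        (fun σ : Equiv.Perm (Fin m) => ∀ i : Fin m, k ≤ (i : ℕ) → σ i = i),
      L (fun u => x (σ u))

/-- The coefficient `c_i(L) = L(e_{i₁},…,e_{i_m})` of an `m`-form. -/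
noncomputable def coeff (n m : ℕ) (L : (Fin m → (Fin n → ℂ)) → ℂ) (i : Fin m → Fin n) : ℂ :=
  L (fun k => Pi.single (i k) 1)

/-- The matrix `𝔄^k`:
`c_i(𝔄^k) = k/|{1 ≤ u ≤ k : i_u = i_k}|` if `max{i₁,…,i_{k−1}} ≤ i_k`, else `0`. -/
noncomputable def Afrak (n m k : ℕ) (hk : 1 ≤ k) (hkm : k ≤ m) : (Fin m → Fin n) → ℂ :=
  fun i =>
    if ∀ u : Fin m, (u : ℕ) < k → i u ≤ i ⟨k - 1, by omega⟩ then
      (k : ℂ) /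
        ((Finset.univ.filter fun u : Fin m =>
            (u : ℕ) < k ∧ i u = i ⟨k - 1, by omega⟩).card : ℂ)
    else 0

/-!
Write `G_k` for the permutations fixing every position `≥ k`, so that
`c_i(S_k L_P) = (k!)⁻¹ ∑_{σ ∈ G_k} c(i ∘ σ)`. The transpositions `(a k)`, `a ≤ k`, represent the
left cosets of `G_{k-1}` in `G_k`. Since `c` vanishes off nondecreasing multi-indices, if some
`i_u` with `u < k` exceeds `i_k` the whole `G_{k-1}`-sum vanishes. Otherwise the coset of `(a k)`
contributes the full `G_{k-1}`-sum when `i_a = i_k`, and nothing when `i_a < i_k`, by the same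
vanishing applied to `i ∘ (a k)`.
-/

open Finset Equiv Nat

def fixingPerms (m k : ℕ) : Finset (Perm (Fin m)) :=
  univ.filter fun σ => ∀ i : Fin m, k ≤ (i : ℕ) → σ i = i

section fixingPerms

variable {m k : ℕ} {σ : Perm (Fin m)}

lemma mem_fixingPerms : σ ∈ fixingPerms m k ↔ ∀ i : Fin m, k ≤ (i : ℕ) → σ i = i := by
  simp [fixingPerms]

lemma inv_mem_fixingPerms (hσ : σ ∈ fixingPerms m k) : σ⁻¹ ∈ fixingPerms m k := by
  rw [mem_fixingPerms] at hσ ⊢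
  intro i hi
  rw [Perm.inv_eq_iff_eq, hσ i hi]

lemma apply_lt_of_mem_fixingPerms (hσ : σ ∈ fixingPerms m k) {v : Fin m} (hv : (v : ℕ) < k) :
    (σ v : ℕ) < k := by
  by_contra! h
  have : σ v = v := σ.injective (mem_fixingPerms.mp hσ _ h)
  omega

lemma swap_mul_mem_fixingPerms_succ {p a : Fin m} (ha : a ≤ p) {τ : Perm (Fin m)}
    (hτ : τ ∈ fixingPerms m p) : swap a p * τ ∈ fixingPerms m (p + 1) := by
  rw [mem_fixingPerms] at hτ ⊢
  intro j hj
  rw [Perm.mul_apply, hτ j (by omega), swap_apply_of_ne_of_ne] <;>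
    (rintro rfl; rw [Fin.le_def] at ha; omega)

lemma swap_apply_mul_mem_fixingPerms {p : Fin m} (hσ : σ ∈ fixingPerms m (p + 1)) :
    swap (σ p) p * σ ∈ fixingPerms m p := by
  rw [mem_fixingPerms] at hσ ⊢
  intro j hj
  rcases eq_or_ne j p with rfl | hjp
  · simp
  have hj' : (p : ℕ) + 1 ≤ j := by have := Fin.val_ne_of_ne hjp; omega
  have hσj := hσ j hj'
  rw [Perm.mul_apply, hσj,
    swap_apply_of_ne_of_ne (fun h => hjp (σ.injective (hσj.trans h))) hjp]

lemma sum_fixingPerms_succ {M : Type*} [AddCommMonoid M] (p : Fin m) (f : Perm (Fin m) → M) :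
    ∑ σ ∈ fixingPerms m (p + 1), f σ =
      ∑ a ∈ Iic p, ∑ τ ∈ fixingPerms m p, f (swap a p * τ) := by
  rw [← sum_product']
  refine sum_nbij' (fun σ => (σ p, swap (σ p) p * σ)) (fun x => swap x.1 p * x.2)
    (fun σ hσ => ?_) (fun x hx => ?_) (fun σ _ => ?_) (fun x hx => ?_) (fun σ _ => ?_)
  · refine mem_product.mpr ⟨?_, swap_apply_mul_mem_fixingPerms hσ⟩
    have := apply_lt_of_mem_fixingPerms hσ (v := p) (by omega)
    simp only [mem_Iic, Fin.le_def]
    omega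
  · obtain ⟨ha, hτ⟩ := mem_product.mp hx
    exact swap_mul_mem_fixingPerms_succ (mem_Iic.mp ha) hτ
  · simp [← mul_assoc]
  · obtain ⟨a, τ⟩ := x
    have hτp : τ p = p := mem_fixingPerms.mp (mem_product.mp hx).2 p le_rfl
    simp [hτp, ← mul_assoc]
  · simp [← mul_assoc]

end fixingPerms

section Monotone

variable {m : ℕ} {α M : Type*} [AddCommMonoid M] {c : (Fin m → α) → M}

lemma sum_fixingPerms_eq_zero [Preorder α] (hc : ∀ j, ¬ Monotone j → c j = 0)
    {k : ℕ} {i : Fin m → α} {u p : Fin m} (hu : (u : ℕ) < k) (hp : k ≤ (p : ℕ))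
    (hup : i p < i u) : ∑ σ ∈ fixingPerms m k, c (i ∘ σ) = 0 := by
  refine sum_eq_zero fun σ hσ => hc _ fun hmono => ?_
  have hv := apply_lt_of_mem_fixingPerms (inv_mem_fixingPerms hσ) hu
  have hσp : σ p = p := mem_fixingPerms.mp hσ p hp
  have := hmono (show σ⁻¹ u ≤ p from Fin.le_def.mpr (by omega))
  simp only [Function.comp_apply, Perm.coe_inv, apply_symm_apply, hσp] at this
  exact (hup.trans_le this).false

lemma sum_fixingPerms_succ_eq_card_nsmul [PartialOrder α] [DecidableEq α]
    (hc : ∀ j, ¬ Monotone j → c j = 0) {i : Fin m → α} {p : Fin m} (hi : ∀ u ≤ p, i u ≤ i p) :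
    ∑ σ ∈ fixingPerms m (p + 1), c (i ∘ σ) =
      #{u ∈ Iic p | i u = i p} • ∑ σ ∈ fixingPerms m p, c (i ∘ σ) := by
  rw [← sum_const, sum_filter, sum_fixingPerms_succ]
  refine sum_congr rfl fun a ha => ?_
  have hap : i a ≤ i p := hi a (mem_Iic.mp ha)
  simp only [Perm.coe_mul, ← Function.comp_assoc]
  split_ifs with hia
  · rw [show i ∘ swap a p = i from funext (apply_swap_eq_self hia)]
  · have ha' : (a : ℕ) < p := Fin.lt_def.mp <|
      (mem_Iic.mp ha).lt_of_ne fun h => hia (congrArg i h)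
    exact sum_fixingPerms_eq_zero hc (u := a) (p := p) ha' le_rfl
      (by simpa using (hap.lt_of_ne hia))

end Monotone

lemma LP_single {n m : ℕ} (c : (Fin m → Fin n) → ℂ) (j : Fin m → Fin n) :
    LP n m c (fun u => Pi.single (j u) 1) = c j := by
  simp [LP, Pi.single_apply, prod_boole, ← funext_iff]

lemma coeff_partialSym_LP {n m : ℕ} (k : ℕ) (c : (Fin m → Fin n) → ℂ) (i : Fin m → Fin n) :
    coeff n m (partialSym n m k (LP n m c)) i =
      (k ! : ℂ)⁻¹ * ∑ σ ∈ fixingPerms m k, c (i ∘ σ) := by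
  simp only [coeff, partialSym, LP_single]
  rfl

/-- `S_{k−1} L_P = 𝔄^k ⊙ S_k L_P` at the level of coefficients: for every `i`,
`c_i(S_{k−1} L_P) = c_i(𝔄^k) · c_i(S_k L_P)`. -/
theorem partialSym_step_schur (n m k : ℕ) (hk : 1 ≤ k) (hkm : k ≤ m)
    (c : (Fin m → Fin n) → ℂ)
    (hc : ∀ j : Fin m → Fin n, ¬ Monotone j → c j = 0)
    (i : Fin m → Fin n) :
    coeff n m (partialSym n m (k - 1) (LP n m c)) i =
      Afrak n m k hk hkm i * coeff n m (partialSym n m k (LP n m c)) i := by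
  obtain ⟨K, rfl⟩ : ∃ K, k = K + 1 := ⟨k - 1, by omega⟩
  set p : Fin m := ⟨K, by omega⟩
  rw [coeff_partialSym_LP, coeff_partialSym_LP, Afrak]
  split_ifs with hi
  · have hlt_iff_le : ∀ u : Fin m, (u : ℕ) < K + 1 ↔ u ≤ p := fun u => by
      rw [Fin.le_def, Nat.lt_succ_iff]
    have hcard : #{u : Fin m | (u : ℕ) < K + 1 ∧ i u = i p} = #{u ∈ Iic p | i u = i p} := by
      congr 1
      ext u
      simp only [mem_filter, mem_univ, true_and, mem_Iic, hlt_iff_le]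
    have hr : (#{u ∈ Iic p | i u = i p} : ℂ) ≠ 0 := Nat.cast_ne_zero.mpr
      (card_ne_zero_of_mem (a := p) (by simp))
    change _ = _ / (#{u : Fin m | (u : ℕ) < K + 1 ∧ i u = i p} : ℂ) * _
    rw [hcard, sum_fixingPerms_succ_eq_card_nsmul hc (p := p)
      fun u hu => hi u ((hlt_iff_le u).mpr hu), nsmul_eq_mul, Nat.factorial_succ]
    push_cast
    field_simp
    rfl
  · obtain ⟨u, hu, hup⟩ : ∃ u : Fin m, (u : ℕ) < K + 1 ∧ i p < i u := by simpa using hi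
    have huK : (u : ℕ) < K := lt_of_le_of_ne (Nat.lt_succ_iff.mp hu) fun h =>
      hup.ne (congrArg i (Fin.ext h)).symm
    rw [Nat.add_sub_cancel, sum_fixingPerms_eq_zero hc huK (le_refl (p : ℕ)) hup]
    simp
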